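/- arXiv:1405.2844 — 2 statements merged into one kernel-verified Lean document; each statement's English description precedes it below -/
import Mathlib

section
/- For every real ε > 0 there exists N such that for all n ≥ N there is a k with k ≤ 81.28·(1+ε)·(log n / log 2) and a 3-covering array with k rows and n columns over the alphabet Fin 4; i.e., a matrix M : Fin k → Fin n → Fin 4 such that for every injective tuple of 3 column indices c : Fin 3 → Fin n and every word w : Fin 3 → Fin 4 there exists a row r : Fin k with M r (c i) = w i for all i : Fin 3. -/
/-!
Only the identity of the alternating group `A₄` fixes two distinct letters of `Fin 4`, so
under `A₄` every non-constant word of length 3 has an orbit of size 12 among the 64 words.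
Take `m` random rows on `2n` columns, replace each by its 12 images under `A₄` and add the 4
constant rows. A triple of columns together with a non-constant word is then missed with
probability `(13/16)^m`, so once `512 n² 13^m ≤ 16^m` some choice misses at most `n` such pairs,
and deleting one column from each leaves a covering array with `n` columns and `12m + 4` rows.
As `2^14 ≤ (16/13)^47`, one can take `m ≈ (47/7) lg n`, and then `12m + 4 ≤ 81.28 lg n` for
large `n`.
-/

open Finset Function MulAction

def IsCoveringArray (t : ℕ) {R C α : Type*} (M : R → C → α) : Prop :=
  ∀ c : Fin t → C, Injective c → ∀ w : Fin t → α, ∃ r, ∀ i, M r (c i) = w i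

theorem IsCoveringArray.comp_surjective {t : ℕ} {R R' C α : Type*} {M : R → C → α}
    (hM : IsCoveringArray t M) {e : R' → R} (he : Surjective e) :
    IsCoveringArray t (M ∘ e) := by
  intro c hc w
  obtain ⟨r, hr⟩ := hM c hc w
  obtain ⟨r', rfl⟩ := he r
  exact ⟨r', hr⟩

theorem card_filter_comp_mem {t : ℕ} {C α : Type*} [Fintype C] [DecidableEq C] [Fintype α]
    [DecidableEq α] {c : Fin t → C} (hc : Injective c) (S : Finset (Fin t → α)) :
    #{f : C → α | f ∘ c ∈ S} = #S * Fintype.card α ^ (Fintype.card C - t) := by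
  let E : (C → α) ≃ (Fin t → α) × ({x // x ∉ Set.range c} → α) :=
    (Equiv.piEquivPiSubtypeProd (· ∈ Set.range c) fun _ => α).trans
      (((Equiv.ofInjective c hc).arrowCongr (Equiv.refl α)).symm.prodCongr (Equiv.refl _))
  have hrange : Fintype.card {x // x ∈ Set.range c} = t := by
    convert (Set.card_range_of_injective hc).trans (Fintype.card_fin t)
  rw [card_equiv E (t := S ×ˢ univ) (fun f => by simp [E]; rfl), card_product, card_univ,
    Fintype.card_fun, Fintype.card_subtype_compl, hrange]

section

variable {t : ℕ} {ι C α : Type*} (G : Type*) [Group G] [MulAction G α]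

def orbitExpansion (B : ι → C → α) : α ⊕ G × ι → C → α
  | .inl a, _ => a
  | .inr (g, j), x => g • B j x

theorem isCoveringArray_orbitExpansion [NeZero t] {B : ι → C → α}
    (hB : ∀ c : Fin t → C, Injective c → ∀ w : Fin t → α, (∃ i, w i ≠ w 0) →
      ∃ j, w ∈ orbit G (B j ∘ c)) :
    IsCoveringArray t (orbitExpansion G B) := by
  intro c hc w
  by_cases hw : ∃ i, w i ≠ w 0
  · obtain ⟨j, g, hg⟩ := hB c hc w hw
    exact ⟨.inr (g, j), fun i => congrFun hg i⟩
  · push Not at hw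
    exact ⟨.inl (w 0), fun i => (hw i).symm⟩

open scoped Classical

theorem card_filter_notMem_orbit [Fintype G] [Fintype α]
    (hfree : ∀ g : G, ∀ a b : α, a ≠ b → g • a = a → g • b = b → g = 1)
    {w : Fin t → α} {i j : Fin t} (hw : w i ≠ w j) :
    #{u | w ∉ orbit G u} = Fintype.card α ^ t - Fintype.card G := by
  have hinj : Injective fun g : G => g • w := by
    intro g h hgh
    have hfix : ∀ k, (h⁻¹ * g) • w k = w k := fun k => by
      rw [mul_smul, inv_smul_eq_iff]; exact congrFun hgh k
    simpa [inv_mul_eq_one, eq_comm] using hfree _ _ _ hw (hfix i) (hfix j)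
  have horbit : #{u | w ∈ orbit G u} = Fintype.card G := by
    rw [← card_univ, ← card_image_of_injective univ hinj]
    congr 1
    ext u
    rw [mem_filter, mem_orbit_symm]
    simp [orbit]
  have := card_filter_add_card_filter_not (s := univ) fun u => w ∈ orbit G u
  rw [horbit, card_univ, Fintype.card_fun, Fintype.card_fin] at this
  omega

variable [Fintype C] [Fintype α]

variable (t) in
noncomputable def badPairs [NeZero t] (B : ι → C → α) :
    Finset ((Fin t → C) × (Fin t → α)) :=
  {p | Injective p.1 ∧ (∃ i, p.2 i ≠ p.2 0) ∧ ∀ j, p.2 ∉ orbit G (B j ∘ p.1)}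

variable [NeZero t]

theorem exists_embedding_forall_mem_orbit (B : ι → C → α) {n : ℕ}
    (hn : #(badPairs t G B) + n ≤ Fintype.card C) :
    ∃ e : Fin n ↪ C, ∀ c : Fin t → Fin n, Injective c → ∀ w : Fin t → α,
      (∃ i, w i ≠ w 0) → ∃ j, w ∈ orbit G (B j ∘ e ∘ c) := by
  set S := (badPairs t G B).image fun p => p.1 0
  have hS : Fintype.card (Fin n) ≤ Fintype.card {x // x ∉ S} := by
    rw [Fintype.card_subtype_compl, Fintype.card_fin, Fintype.card_coe]
    have : #S ≤ #(badPairs t G B) := card_image_le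
    omega
  obtain ⟨e⟩ := Function.Embedding.nonempty_of_card_le hS
  let e' := e.trans (Embedding.subtype _)
  refine ⟨e', fun c hc w hw => ?_⟩
  by_contra! hbad
  refine (e (c 0)).2 (mem_image.mpr ⟨(e' ∘ c, w), ?_, rfl⟩)
  simp only [badPairs, mem_filter]
  exact ⟨mem_univ _, e'.injective.comp hc, hw, hbad⟩

variable [Fintype ι] [Fintype G]

theorem card_filter_mem_badPairs_le
    (hfree : ∀ g : G, ∀ a b : α, a ≠ b → g • a = a → g • b = b → g = 1)
    (p : (Fin t → C) × (Fin t → α)) :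
    #{B : ι → C → α | p ∈ badPairs t G B} ≤
      ((Fintype.card α ^ t - Fintype.card G) * Fintype.card α ^ (Fintype.card C - t)) ^
        Fintype.card ι := by
  obtain ⟨c, w⟩ := p
  by_cases hp : Injective c ∧ ∃ i, w i ≠ w 0
  · obtain ⟨hc, hw⟩ := hp
    have hbad : ({B : ι → C → α | (c, w) ∈ badPairs t G B} : Finset _) =
        Fintype.piFinset fun _ =>
          {f : C → α | f ∘ c ∈ ({u | w ∉ orbit G u} : Finset _)} := by
      ext B
      simp [badPairs, hc, hw]
    obtain ⟨i, hi⟩ := hw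
    rw [hbad, Fintype.card_piFinset, prod_const, card_univ, card_filter_comp_mem hc,
      card_filter_notMem_orbit G hfree hi]
  · rw [card_eq_zero.mpr (filter_eq_empty_iff.mpr fun B _ hB => hp ?_)]
    · exact Nat.zero_le _
    simp only [badPairs, mem_filter] at hB
    exact ⟨hB.2.1, hB.2.2.1⟩

theorem exists_card_badPairs_le
    (hfree : ∀ g : G, ∀ a b : α, a ≠ b → g • a = a → g • b = b → g = 1)
    [Nonempty α] (ht : t ≤ Fintype.card C) (d : ℕ)
    (hd : Fintype.card C ^ t * Fintype.card α ^ t * (Fintype.card α ^ t - Fintype.card G) ^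
      Fintype.card ι ≤ d * Fintype.card α ^ (t * Fintype.card ι)) :
    ∃ B : ι → C → α, #(badPairs t G B) ≤ d := by
  set q := Fintype.card α
  set X := ((q ^ t - Fintype.card G) * q ^ (Fintype.card C - t)) ^ Fintype.card ι with hXdef
  have hdouble : ∑ B : ι → C → α, #(badPairs t G B) =
      ∑ p : (Fin t → C) × (Fin t → α), #{B : ι → C → α | p ∈ badPairs t G B} := by
    simpa [bipartiteAbove, bipartiteBelow] using
      sum_card_bipartiteAbove_eq_sum_card_bipartiteBelow (s := univ) (t := univ)
        fun (B : ι → C → α) p => p ∈ badPairs t G B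
  have hX : Fintype.card C ^ t * q ^ t * X ≤ q ^ (Fintype.card C * Fintype.card ι) * d := by
    have hsplit : q ^ (Fintype.card C * Fintype.card ι) =
        q ^ (t * Fintype.card ι) * q ^ ((Fintype.card C - t) * Fintype.card ι) := by
      rw [← pow_add, ← add_mul, Nat.add_sub_cancel' ht]
    calc Fintype.card C ^ t * q ^ t * X
        = Fintype.card C ^ t * q ^ t * (q ^ t - Fintype.card G) ^ Fintype.card ι *
            q ^ ((Fintype.card C - t) * Fintype.card ι) := by
          rw [hXdef, mul_pow, ← pow_mul]; ring
      _ ≤ d * q ^ (t * Fintype.card ι) * q ^ ((Fintype.card C - t) * Fintype.card ι) := by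
          gcongr
      _ = q ^ (Fintype.card C * Fintype.card ι) * d := by rw [hsplit]; ring
  have hsum : ∑ B : ι → C → α, #(badPairs t G B) ≤ ∑ _B : ι → C → α, d := calc
    ∑ B : ι → C → α, #(badPairs t G B)
      ≤ ∑ _p : (Fin t → C) × (Fin t → α), X := by
        rw [hdouble]
        exact sum_le_sum fun p _ => card_filter_mem_badPairs_le G hfree p
    _ ≤ ∑ _B : ι → C → α, d := by
        simpa [Fintype.card_fun, ← pow_mul, mul_comm] using hX
  obtain ⟨B, -, hB⟩ := exists_le_of_sum_le univ_nonempty hsum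
  exact ⟨B, hB⟩

end

theorem exists_isCoveringArray_orbitExpansion {t : ℕ} [NeZero t] {α : Type*} (G : Type*)
    [Group G] [MulAction G α] [Fintype α] [Nonempty α] [Fintype G]
    (hfree : ∀ g : G, ∀ a b : α, a ≠ b → g • a = a → g • b = b → g = 1)
    {n d m : ℕ} (ht : t ≤ n + d)
    (hd : (n + d) ^ t * Fintype.card α ^ t * (Fintype.card α ^ t - Fintype.card G) ^ m ≤
      d * Fintype.card α ^ (t * m)) :
    ∃ B : Fin m → Fin n → α, IsCoveringArray t (orbitExpansion G B) := by
  obtain ⟨B, hB⟩ := exists_card_badPairs_le G (C := Fin (n + d)) (ι := Fin m) hfree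
    (by simpa using ht) d (by simpa using hd)
  obtain ⟨e, he⟩ := exists_embedding_forall_mem_orbit (t := t) G B (n := n) (by simp; omega)
  exact ⟨fun j x => B j (e x), isCoveringArray_orbitExpansion G he⟩

open Equiv in
theorem alternatingGroup_fin_four_eq_one_of_fixed_pair (g : alternatingGroup (Fin 4))
    (a b : Fin 4) (hab : a ≠ b) (ha : g • a = a) (hb : g • b = b) : g = 1 := by
  -- Otherwise `g` would be the transposition of the two remaining points.
  have key : ∀ g : Perm (Fin 4), ∀ a b : Fin 4, a ≠ b → g a = a → g b = b →
      Perm.sign g = 1 → g = 1 := by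
    decide
  exact Subtype.ext (key g a b hab ha hb g.2)

theorem card_alternatingGroup_fin_four : Fintype.card (alternatingGroup (Fin 4)) = 12 := by
  have := two_mul_card_alternatingGroup (α := Fin 4)
  rw [Fintype.card_perm, Fintype.card_fin, show Nat.factorial 4 = 24 from rfl] at this
  omega

theorem exists_isCoveringArray_three_four {n m : ℕ} (hn : 2 ≤ n)
    (h : 512 * n ^ 2 * 13 ^ m ≤ 16 ^ m) :
    ∃ M : Fin (12 * m + 4) → Fin n → Fin 4, IsCoveringArray 3 M := by
  have hd : (n + n) ^ 3 * 4 ^ 3 * (4 ^ 3 - 12) ^ m ≤ n * 4 ^ (3 * m) := calc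
    (n + n) ^ 3 * 4 ^ 3 * (4 ^ 3 - 12) ^ m = n * (512 * n ^ 2 * 13 ^ m) * 4 ^ m := by
      rw [show 4 ^ 3 - 12 = 4 * 13 by norm_num, mul_pow]; ring
    _ ≤ n * 16 ^ m * 4 ^ m := by gcongr
    _ = n * 4 ^ (3 * m) := by rw [pow_mul, mul_assoc, ← mul_pow]; norm_num
  obtain ⟨B, hB⟩ := exists_isCoveringArray_orbitExpansion (alternatingGroup (Fin 4))
    alternatingGroup_fin_four_eq_one_of_fixed_pair (t := 3) (n := n) (d := n) (by omega)
    (by rw [card_alternatingGroup_fin_four, Fintype.card_fin]; exact hd)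
  let e : Fin (12 * m + 4) ≃ Fin 4 ⊕ alternatingGroup (Fin 4) × Fin m :=
    Fintype.equivOfCardEq <| by
      rw [Fintype.card_sum, Fintype.card_prod, card_alternatingGroup_fin_four]
      simp only [Fintype.card_fin]
      ring
  exact ⟨_, hB.comp_surjective e.surjective⟩

theorem exists_base_row_count {n : ℕ} (hK : 1400 ≤ Nat.log 2 n) :
    ∃ m, 512 * n ^ 2 * 13 ^ m ≤ 16 ^ m ∧ 25 * (12 * m + 4) ≤ 2032 * Nat.log 2 n := by
  set K := Nat.log 2 n
  have hnK : n < 2 ^ (K + 1) := Nat.lt_pow_succ_log_self one_lt_two n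
  obtain ⟨j, hj⟩ : ∃ j, 2 * K + 11 ≤ 14 * j ∧ 14 * j ≤ 2 * K + 24 :=
    ⟨(2 * K + 24) / 14, by omega⟩
  refine ⟨47 * j, ?_, by omega⟩
  calc 512 * n ^ 2 * 13 ^ (47 * j)
      ≤ 2 ^ 9 * (2 ^ (K + 1)) ^ 2 * 13 ^ (47 * j) := by gcongr; norm_num
    _ = 2 ^ (2 * K + 11) * 13 ^ (47 * j) := by ring
    _ ≤ 2 ^ (14 * j) * 13 ^ (47 * j) := by gcongr; exacts [one_le_two, hj.1]
    _ = (2 ^ 14 * 13 ^ 47) ^ j := by rw [mul_pow, ← pow_mul, ← pow_mul]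
    _ ≤ (16 ^ 47) ^ j := Nat.pow_le_pow_left (by norm_num) j
    _ = 16 ^ (47 * j) := (pow_mul _ _ _).symm

theorem covering_array_3_4 :
    ∀ ε : ℝ, 0 < ε → ∃ N : ℕ, ∀ n : ℕ, N ≤ n →
      ∃ k : ℕ, (k : ℝ) ≤ 81.28 * (1 + ε) * (Real.log n / Real.log 2) ∧
        ∃ M : Fin k → Fin n → Fin 4,
          ∀ c : Fin 3 → Fin n, Function.Injective c →
            ∀ w : Fin 3 → Fin 4, ∃ r : Fin k, ∀ i : Fin 3, M r (c i) = w i := by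
  intro ε hε
  refine ⟨2 ^ 1400, fun n hn => ?_⟩
  have hK : 1400 ≤ Nat.log 2 n := by
    have := (pow_lt_pow_iff_right₀ one_lt_two).1
      (hn.trans_lt (Nat.lt_pow_succ_log_self one_lt_two n))
    omega
  obtain ⟨m, hcond, hsize⟩ := exists_base_row_count hK
  obtain ⟨M, hM⟩ :=
    exists_isCoveringArray_three_four ((Nat.le_self_pow (by norm_num) 2).trans hn) hcond
  refine ⟨12 * m + 4, ?_, M, hM⟩
  have hsize' : ((12 * m + 4 : ℕ) : ℝ) ≤ 81.28 * Nat.log 2 n := by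
    have : ((25 * (12 * m + 4) : ℕ) : ℝ) ≤ ((2032 * Nat.log 2 n : ℕ) : ℝ) := by
      exact_mod_cast hsize
    push_cast at this ⊢
    linarith
  calc ((12 * m + 4 : ℕ) : ℝ)
      ≤ 81.28 * Nat.log 2 n := hsize'
    _ ≤ 81.28 * (Real.log n / Real.log 2) := by gcongr; exact Real.natLog_le_logb n 2
    _ ≤ 81.28 * (1 + ε) * (Real.log n / Real.log 2) := by gcongr; linarith
end

section
/- There exists N such that for all natural numbers m ≥ N and all j with 0 ≤ j ≤ m, one has (m.choose j) * ((3*m).choose (m−j)) * ((4*m−j).choose m) ≤ (84 : ℝ)^m. -/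
lemma choose_mul_pow_le (x : ℝ) (hx : 0 ≤ x) (n k : ℕ) (h : k ≤ n) :
    (n.choose k : ℝ) * x ^ k ≤ (1 + x) ^ n := by
  rw [add_comm]
  rw [add_pow]
  have hk : k ∈ Finset.range (n + 1) := Finset.mem_range.mpr (Nat.lt_succ_of_le h)
  calc (n.choose k : ℝ) * x ^ k = x ^ k * 1 ^ (n - k) * (n.choose k : ℝ) := by ring
    _ ≤ ∑ i ∈ Finset.range (n + 1), x ^ i * 1 ^ (n - i) * (n.choose i : ℝ) := by
        apply Finset.single_le_sum (f := fun i => x ^ i * 1 ^ (n - i) * (n.choose i : ℝ)) _ hk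
        intro i _
        positivity

theorem summand_bound_q4 :
    ∃ N : ℕ, ∀ m : ℕ, N ≤ m → ∀ j : ℕ, j ≤ m →
      ((m.choose j) * ((3 * m).choose (m - j)) * ((4 * m - j).choose m) : ℝ) ≤
        (84 : ℝ) ^ m := by
  use 0
  intro m _ j hj
  set t : ℝ := 1319 / 5000 with ht_def
  set v : ℝ := 3583 / 10000 with hv_def
  set u : ℝ := 17915977 / 50000000 with hu_def
  have hu : u = t * (1 + v) := by norm_num [ht_def, hv_def, hu_def]
  have ht0 : (0:ℝ) < t := by norm_num [ht_def]
  have hv0 : (0:ℝ) < v := by norm_num [hv_def]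
  have hu0 : (0:ℝ) < u := by norm_num [hu_def]
  have hA := choose_mul_pow_le t ht0.le m j hj
  have hB := choose_mul_pow_le u hu0.le (3 * m) (m - j) (by omega)
  have hC := choose_mul_pow_le v hv0.le (4 * m - j) m (by omega)
  -- multiply the three inequalities
  have H1 : ((m.choose j : ℝ) * t ^ j) * (((3*m).choose (m-j) : ℝ) * u ^ (m-j)) *
      (((4*m-j).choose m : ℝ) * v ^ m) ≤
      (1+t) ^ m * (1+u) ^ (3*m) * (1+v) ^ (4*m-j) := by
    apply mul_le_mul _ hC (by positivity) (by positivity)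
    exact mul_le_mul hA hB (by positivity) (by positivity)
  -- multiply both sides by u^j
  have H2 := mul_le_mul_of_nonneg_right H1 (le_of_lt (pow_pos hu0 j))
  have hmj : m - j + j = m := by omega
  have h4mj : 4*m - j + j = 4*m := by omega
  have e1 : u ^ (m-j) * u ^ j = u ^ m := by rw [← pow_add, hmj]
  have e2 : (1+v) ^ (4*m-j) * (1+v) ^ j = (1+v) ^ (4*m) := by rw [← pow_add, h4mj]
  have hLHS : ((m.choose j : ℝ) * t ^ j) * (((3*m).choose (m-j) : ℝ) * u ^ (m-j)) *
      (((4*m-j).choose m : ℝ) * v ^ m) * u ^ j =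
      ((m.choose j : ℝ) * ((3*m).choose (m-j) : ℝ) * ((4*m-j).choose m : ℝ)) *
        (u ^ m * v ^ m) * t ^ j := by
    rw [← e1, hu]; ring
  have hRHS : (1+t) ^ m * (1+u) ^ (3*m) * (1+v) ^ (4*m-j) * u ^ j =
      ((1+t) * (1+u) ^ 3 * (1+v) ^ 4) ^ m * t ^ j := by
    have e3 : u ^ j = t ^ j * (1+v) ^ j := by rw [hu, mul_pow]
    rw [mul_pow, mul_pow, ← pow_mul, ← pow_mul, ← e2, e3, hu]; ring
  rw [hLHS, hRHS] at H2
  have H3 : ((m.choose j : ℝ) * ((3*m).choose (m-j) : ℝ) * ((4*m-j).choose m : ℝ)) *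
      (u ^ m * v ^ m) ≤ ((1+t) * (1+u) ^ 3 * (1+v) ^ 4) ^ m :=
    le_of_mul_le_mul_right H2 (pow_pos ht0 j)
  have hkey : (1+t) * (1+u) ^ 3 * (1+v) ^ 4 ≤ 84 * (u * v) := by
    norm_num [ht_def, hu_def, hv_def]
  have H4 : ((1+t) * (1+u) ^ 3 * (1+v) ^ 4) ^ m ≤ (84 * (u * v)) ^ m := by
    apply pow_le_pow_left₀ (by positivity) hkey
  have H5 : (84 * (u * v)) ^ m = (84:ℝ) ^ m * (u ^ m * v ^ m) := by
    rw [mul_pow, mul_pow]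
  have H6 : ((m.choose j : ℝ) * ((3*m).choose (m-j) : ℝ) * ((4*m-j).choose m : ℝ)) *
      (u ^ m * v ^ m) ≤ (84:ℝ) ^ m * (u ^ m * v ^ m) := by
    rw [← H5]; exact le_trans H3 H4
  have hfinal := le_of_mul_le_mul_right H6 (by positivity : (0:ℝ) < u ^ m * v ^ m)

  exact hfinal
end
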